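/- Let (R, m) be a Noetherian local ring. Then m = tr_R(m) fails precisely when m is generated by a single non-zerodivisor of R. -/

import Mathlib

/-- The trace ideal of an `R`-module `M`. -/
def traceIdeal (R : Type*) [CommRing R] (M : Type*) [AddCommGroup M] [Module R M] : Ideal R :=
  ⨆ f : M →ₗ[R] R, LinearMap.range f

/-!
If `tr(m) ≠ m`, some functional `f : m → R` takes a unit value `f x`. Since
`x * f y = f (x * y) = y * f x` for `y ∈ m`, every `y` is a multiple of `x`, and `z * x = 0` forces
`z * f x = 0`; so `m = (x)` with `x` a non-zerodivisor. Conversely, if `m = (a)` with `a` a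
non-zerodivisor, then `m ≅ R` sends `a` to `1`, so `tr(m) = R ≠ m`.
-/

section

variable {R : Type*} [CommRing R]

theorem range_le_traceIdeal {M : Type*} [AddCommGroup M] [Module R M] (f : M →ₗ[R] R) :
    LinearMap.range f ≤ traceIdeal R M :=
  le_iSup (fun g : M →ₗ[R] R => LinearMap.range g) f

theorem Ideal.le_traceIdeal (I : Ideal R) : I ≤ traceIdeal R I := fun y hy =>
  range_le_traceIdeal I.subtype ⟨⟨y, hy⟩, rfl⟩

theorem traceIdeal_le_maximalIdeal_iff [IsLocalRing R] {M : Type*} [AddCommGroup M]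
    [Module R M] :
    traceIdeal R M ≤ IsLocalRing.maximalIdeal R ↔ ∀ (f : M →ₗ[R] R) (x : M), ¬IsUnit (f x) := by
  rw [traceIdeal, iSup_le_iff]
  simp only [SetLike.le_def, LinearMap.mem_range, forall_exists_index,
    forall_apply_eq_imp_iff, IsLocalRing.mem_maximalIdeal, mem_nonunits_iff]

namespace Ideal

variable {I : Ideal R} (f : I →ₗ[R] R)

theorem mul_apply_comm (x y : I) : (x : R) * f y = y * f x := by
  have hxy : (x : R) • y = (y : R) • x := Subtype.ext (mul_comm _ _)
  simpa only [smul_eq_mul, LinearMap.map_smul] using congrArg f hxy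

theorem eq_span_singleton_of_isUnit_apply {x : I} (hx : IsUnit (f x)) :
    I = span {(x : R)} := by
  refine le_antisymm (fun y hy => mem_span_singleton'.mpr ⟨f ⟨y, hy⟩ * ↑hx.unit⁻¹, ?_⟩)
    ((span_singleton_le_iff_mem I).mpr x.2)
  rw [mul_right_comm, mul_comm _ (x : R), mul_apply_comm, mul_assoc, IsUnit.mul_val_inv, mul_one]

theorem mem_nonZeroDivisors_of_isUnit_apply {x : I} (hx : IsUnit (f x)) :
    (x : R) ∈ nonZeroDivisors R := by
  refine mem_nonZeroDivisors_iff_right.mpr fun z hz => ?_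
  have hzfx : z * f x = 0 := by
    rw [← smul_eq_mul, ← LinearMap.map_smul, show z • x = 0 from Subtype.ext hz, map_zero]
  exact hx.mul_left_eq_zero.mp hzfx

end Ideal

theorem one_mem_traceIdeal_span_singleton {a : R} (ha : a ∈ nonZeroDivisors R) :
    (1 : R) ∈ traceIdeal R (Ideal.span {a}) := by
  have hinj : Function.Injective (LinearMap.toSpanSingleton R R a) := fun r s hrs =>
    (mul_cancel_right_mem_nonZeroDivisors ha).mp hrs
  let e : R ≃ₗ[R] Ideal.span {a} := (LinearEquiv.ofInjective _ hinj).trans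
    (LinearEquiv.ofEq _ _ (LinearMap.span_singleton_eq_range R R a).symm)
  exact range_le_traceIdeal e.symm.toLinearMap ⟨e 1, e.symm_apply_apply 1⟩

end

theorem maximalIdeal_traceIdeal_ne_iff_principal_nzd_general (R : Type*) [CommRing R]
    [IsLocalRing R] :
    traceIdeal R (IsLocalRing.maximalIdeal R) ≠ IsLocalRing.maximalIdeal R ↔
      ∃ a : R, a ∈ nonZeroDivisors R ∧ IsLocalRing.maximalIdeal R = Ideal.span {a} := by
  set m := IsLocalRing.maximalIdeal R
  rw [Ne, le_antisymm_iff, and_iff_left m.le_traceIdeal]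
  constructor
  · rw [traceIdeal_le_maximalIdeal_iff]
    push Not
    rintro ⟨f, x, hx⟩
    exact ⟨x, Ideal.mem_nonZeroDivisors_of_isUnit_apply f hx,
      Ideal.eq_span_singleton_of_isUnit_apply f hx⟩
  · rintro ⟨a, ha, hm⟩ hle
    exact m.one_notMem (hle (hm ▸ one_mem_traceIdeal_span_singleton ha))

/-- For a Noetherian local ring `(R, m)`, `m = tr_R(m)` fails precisely when `m` is
generated by a single non-zerodivisor of `R`. -/
theorem maximalIdeal_traceIdeal_ne_iff_principal_nzd (R : Type*) [CommRing R]
    [IsNoetherianRing R] [IsLocalRing R] :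
    traceIdeal R (IsLocalRing.maximalIdeal R) ≠ IsLocalRing.maximalIdeal R ↔
      ∃ a : R, a ∈ nonZeroDivisors R ∧ IsLocalRing.maximalIdeal R = Ideal.span {a} :=
  maximalIdeal_traceIdeal_ne_iff_principal_nzd_general R
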